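/- arXiv:2205.14859 — 4 statements merged into one kernel-verified Lean document; each statement's English description precedes it below -/
import Mathlib

section
/- Let I be a nonempty finite set (the item corpus), s : I → ℝ a score function, p : I → ℝ a probability mass function with p k > 0 for every k ∈ I, and let (J_n)_{n≥1} be a sequence of independent identically distributed I-valued random variables on a probability space with P(J_n = k) = p k for every k ∈ I. For a fixed item i ∈ I define for each n ≥ 1 the popularity-corrected resampling weight W_n(i) = (exp(s i)/p i) / Σ_{j=1}^n exp(s(J_j))/p(J_j). Then almost surely, n · p(i) · W_n(i) converges to exp(s i) / Σ_{k∈I} exp(s k) as n → ∞. -/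
/-! The weights `exp (s j) / p j` are importance weights: their mean under `p` is the partition
function `Z = ∑ k, exp (s k)`. By the strong law of large numbers the batch sum of the weights
is `n Z + o(n)` almost surely, so `n · p i · W_n(i) = exp (s i) / (batch sum / n) → exp (s i) / Z`. -/

open MeasureTheory ProbabilityTheory Filter Topology Finset

section DiscreteRandomVariables

variable {Ω α : Type*} [MeasurableSpace Ω] {μ : Measure Ω}
  [MeasurableSpace α] [MeasurableSingletonClass α]

theorem identDistrib_of_measure_preimage_singleton [Countable α] {X Y : Ω → α}
    (hX : Measurable X) (hY : Measurable Y) (h : ∀ a, μ (X ⁻¹' {a}) = μ (Y ⁻¹' {a})) :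
    IdentDistrib X Y μ μ where
  aemeasurable_fst := hX.aemeasurable
  aemeasurable_snd := hY.aemeasurable
  map_eq := Measure.ext_iff_singleton.mpr fun a => by
    rw [Measure.map_apply hX (measurableSet_singleton a),
      Measure.map_apply hY (measurableSet_singleton a), h]

theorem integral_comp_eq_sum [Fintype α] [IsFiniteMeasure μ] {X : Ω → α} (hX : Measurable X)
    (f : α → ℝ) : ∫ ω, f (X ω) ∂μ = ∑ a, μ.real (X ⁻¹' {a}) * f a := by
  rw [← integral_map hX.aemeasurable (measurable_of_countable f).aestronglyMeasurable,
    integral_fintype .of_finite]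
  refine sum_congr rfl fun a _ => ?_
  rw [Measure.real, Measure.map_apply hX (measurableSet_singleton a), smul_eq_mul]
  rfl

theorem ae_tendsto_average_comp [Fintype α] [IsFiniteMeasure μ] {J : ℕ → Ω → α}
    (hJ : ∀ n, Measurable (J n)) (hindep : Pairwise (Function.onFun (IndepFun · · μ) J))
    (hident : ∀ n, IdentDistrib (J n) (J 0) μ μ) (f : α → ℝ) :
    ∀ᵐ ω ∂μ, Tendsto (fun n : ℕ => (n : ℝ)⁻¹ * ∑ j ∈ range n, f (J j ω)) atTop
      (𝓝 (∑ a, μ.real (J 0 ⁻¹' {a}) * f a)) := by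
  have hf : Measurable f := measurable_of_countable f
  have hint : Integrable (fun ω => f (J 0 ω)) μ :=
    (integrable_map_measure hf.aestronglyMeasurable (hJ 0).aemeasurable).mp .of_finite
  have := strong_law_ae (fun n ω => f (J n ω)) hint
    (fun m n hmn => (hindep hmn).comp hf hf) (fun n => (hident n).comp hf)
  simpa only [smul_eq_mul, integral_comp_eq_sum (hJ 0)] using this

end DiscreteRandomVariables

theorem tendsto_natCast_mul_div_of_tendsto_average {S : ℕ → ℝ} {L : ℝ} (hL : L ≠ 0)
    (hS : Tendsto (fun n : ℕ => (n : ℝ)⁻¹ * S n) atTop (𝓝 L)) (c : ℝ) :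
    Tendsto (fun n : ℕ => n * c / S n) atTop (𝓝 (c / L)) := by
  refine (tendsto_const_nhds.div hS hL).congr fun n => ?_
  rw [Pi.div_apply, inv_mul_eq_div, div_div_eq_mul_div, mul_comm]

theorem stmt_3_general
    {I : Type*} [Fintype I] [MeasurableSpace I] [MeasurableSingletonClass I]
    (s : I → ℝ) (p : I → ℝ) (hp_pos : ∀ k, 0 < p k)
    {Ω : Type*} [MeasurableSpace Ω] (μ : Measure Ω) [IsProbabilityMeasure μ]
    (J : ℕ → Ω → I) (hmeas : ∀ n, Measurable (J n))
    (hindep : iIndepFun (m := fun _ => ‹MeasurableSpace I›) J μ)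
    (hdist : ∀ n k, μ {ω | J n ω = k} = ENNReal.ofReal (p k))
    (i : I) :
    ∀ᵐ ω ∂μ, Tendsto (fun n : ℕ =>
        (n : ℝ) * p i *
          ((Real.exp (s i) / p i) /
            ∑ j ∈ Finset.range n, Real.exp (s (J j ω)) / p (J j ω)))
      atTop (nhds (Real.exp (s i) / ∑ k, Real.exp (s k))) := by
  have hident : ∀ n, IdentDistrib (J n) (J 0) μ μ := fun n =>
    identDistrib_of_measure_preimage_singleton (hmeas n) (hmeas 0) fun k => by
      simp only [Set.preimage, Set.mem_singleton_iff, hdist]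
  have hmean : ∑ k, μ.real (J 0 ⁻¹' {k}) * (Real.exp (s k) / p k) = ∑ k, Real.exp (s k) := by
    refine sum_congr rfl fun k _ => ?_
    have hJk : μ (J 0 ⁻¹' {k}) = ENNReal.ofReal (p k) := hdist 0 k
    rw [Measure.real, hJk, ENNReal.toReal_ofReal (hp_pos k).le]
    field_simp [(hp_pos k).ne']
  have hZ : ∑ k, Real.exp (s k) ≠ 0 :=
    (sum_pos (fun k _ => Real.exp_pos (s k)) ⟨i, mem_univ i⟩).ne'
  filter_upwards [ae_tendsto_average_comp hmeas (fun m n hmn => hindep.indepFun hmn) hident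
    fun k => Real.exp (s k) / p k] with ω hω
  rw [hmean] at hω
  refine (tendsto_natCast_mul_div_of_tendsto_average hZ hω (Real.exp (s i))).congr fun n => ?_
  field_simp [(hp_pos i).ne']

/-- Asymptotic form of Theorem 3.1: as the batch size `n → ∞`, the probability
`n · p(i) · W_n(i)` of item `i` appearing in the importance-resampled set converges almost
surely to the softmax probability of `i` over the full corpus. -/
theorem stmt_3
    {I : Type*} [Fintype I] [Nonempty I] [MeasurableSpace I] [MeasurableSingletonClass I]
    (s : I → ℝ) (p : I → ℝ) (hp_pos : ∀ k, 0 < p k) (hp_sum : ∑ k, p k = 1)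
    {Ω : Type*} [MeasurableSpace Ω] (μ : Measure Ω) [IsProbabilityMeasure μ]
    (J : ℕ → Ω → I) (hmeas : ∀ n, Measurable (J n))
    (hindep : iIndepFun (m := fun _ => ‹MeasurableSpace I›) J μ)
    (hdist : ∀ n k, μ {ω | J n ω = k} = ENNReal.ofReal (p k))
    (i : I) :
    ∀ᵐ ω ∂μ, Tendsto (fun n : ℕ =>
        (n : ℝ) * p i *
          ((Real.exp (s i) / p i) /
            ∑ j ∈ Finset.range n, Real.exp (s (J j ω)) / p (J j ω)))
      atTop (nhds (Real.exp (s i) / ∑ k, Real.exp (s k))) :=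
  stmt_3_general s p hp_pos μ J hmeas hindep hdist i
end

section
/- Let V be a real-valued random variable on a probability space such that V ≥ a almost surely for some constant a > 0, and suppose V, V², and |V − E[V]|³ are integrable. Then E[1/V] ≤ 1/E[V] + Var(V)/(E[V])³ + E[|V − E[V]|³]/a⁴, where Var(V) = E[(V − E[V])²]. -/
/-!
Expanding `1 / v` around `m = E[V]` to third order gives the exact identity
`1/v = 1/m - (v-m)/m² + (v-m)²/m³ - (v-m)³/(v m³)`. Since `v ≥ a` and `m ≥ a`, the
remainder is at most `|v-m|³/a⁴`. Taking expectations, the linear term vanishes and the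
quadratic term is `Var(V)/m³`.
-/

open MeasureTheory ProbabilityTheory

section Field

variable {K : Type*} [Field K]

theorem one_div_eq_taylor_three {v m : K} (hv : v ≠ 0) (hm : m ≠ 0) :
    1 / v = 1 / m - (v - m) / m ^ 2 + (v - m) ^ 2 / m ^ 3 - (v - m) ^ 3 / (v * m ^ 3) := by
  field_simp
  ring

variable [LinearOrder K] [IsStrictOrderedRing K]

theorem neg_pow_three_div_le_abs_pow_three_div {v m a : K} (ha : 0 < a) (hv : a ≤ v)
    (hm : a ≤ m) : -((v - m) ^ 3 / (v * m ^ 3)) ≤ |v - m| ^ 3 / a ^ 4 := by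
  have hv0 : 0 < v := ha.trans_le hv
  have hm0 : 0 < m := ha.trans_le hm
  have hden : a ^ 4 ≤ v * m ^ 3 := by
    rw [pow_succ']
    exact mul_le_mul hv (pow_le_pow_left₀ ha.le hm 3) (by positivity) hv0.le
  have hnum : -((v - m) ^ 3) ≤ |v - m| ^ 3 := by
    rw [← abs_pow]
    exact neg_le_abs _
  calc -((v - m) ^ 3 / (v * m ^ 3)) = -((v - m) ^ 3) / (v * m ^ 3) := (neg_div _ _).symm
    _ ≤ |v - m| ^ 3 / (v * m ^ 3) := div_le_div_of_nonneg_right hnum (by positivity)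
    _ ≤ |v - m| ^ 3 / a ^ 4 := by gcongr

theorem one_div_le_taylor_two_add_abs_pow_three {v m a : K} (ha : 0 < a) (hv : a ≤ v)
    (hm : a ≤ m) :
    1 / v ≤ 1 / m - (v - m) / m ^ 2 + (v - m) ^ 2 / m ^ 3 + |v - m| ^ 3 / a ^ 4 := by
  rw [one_div_eq_taylor_three (ha.trans_le hv).ne' (ha.trans_le hm).ne']
  linarith [neg_pow_three_div_le_abs_pow_three_div ha hv hm]

end Field

section Probability

variable {Ω : Type*} [MeasurableSpace Ω] {μ : Measure Ω} {V : Ω → ℝ} {a : ℝ}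

theorem le_integral_of_ae_le [IsProbabilityMeasure μ] (hV : Integrable V μ)
    (hVa : ∀ᵐ ω ∂μ, a ≤ V ω) : a ≤ ∫ ω, V ω ∂μ := by
  simpa using integral_mono_ae (integrable_const a) hV hVa

theorem integrable_one_div_of_ae_le [IsFiniteMeasure μ] (ha : 0 < a) (hV : AEMeasurable V μ)
    (hVa : ∀ᵐ ω ∂μ, a ≤ V ω) : Integrable (fun ω => 1 / V ω) μ := by
  refine (integrable_const (1 / a)).mono' (hV.const_div 1).aestronglyMeasurable ?_
  filter_upwards [hVa] with ω hω
  rw [Real.norm_eq_abs, abs_of_nonneg (one_div_nonneg.mpr (ha.trans_le hω).le)]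
  exact one_div_le_one_div_of_le ha hω

theorem integrable_sub_const_pow_two [IsFiniteMeasure μ] (hV : MemLp V 2 μ) (m : ℝ) :
    Integrable (fun ω => (V ω - m) ^ 2) μ := by
  simpa using (hV.sub (memLp_const m)).integrable_sq

theorem integrable_taylor_one [IsFiniteMeasure μ] (hV : Integrable V μ) (m : ℝ) :
    Integrable (fun ω => 1 / m - (V ω - m) / m ^ 2) μ :=
  (integrable_const _).sub ((hV.sub (integrable_const m)).div_const _)

theorem integrable_taylor_two [IsFiniteMeasure μ] (hV : MemLp V 2 μ) (m : ℝ) :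
    Integrable (fun ω => 1 / m - (V ω - m) / m ^ 2 + (V ω - m) ^ 2 / m ^ 3) μ :=
  (integrable_taylor_one (hV.integrable one_le_two) m).add
    ((integrable_sub_const_pow_two hV m).div_const _)

theorem integral_taylor_two [IsProbabilityMeasure μ] (hV : MemLp V 2 μ) :
    ∫ ω, (1 / μ[V] - (V ω - μ[V]) / μ[V] ^ 2 + (V ω - μ[V]) ^ 2 / μ[V] ^ 3) ∂μ
      = 1 / μ[V] + variance V μ / μ[V] ^ 3 := by
  have hV1 : Integrable V μ := hV.integrable one_le_two
  have hcentered : Integrable (fun ω => V ω - μ[V]) μ := hV1.sub (integrable_const _)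
  have hmean : ∫ ω, (V ω - μ[V]) ∂μ = 0 := by
    rw [integral_sub hV1 (integrable_const _)]
    simp
  rw [integral_add (integrable_taylor_one hV1 _) ((integrable_sub_const_pow_two hV _).div_const _),
    integral_sub (integrable_const _) (hcentered.div_const _), integral_div, integral_div,
    integral_div, hmean, variance_eq_integral hV1.aemeasurable]
  simp

end Probability

/-- Toolbox lemma, third inequality: for a random variable `V ≥ a > 0` a.s. with `V`, `V²`
and `|V − E[V]|³` integrable,
`E[1/V] ≤ 1/E[V] + Var(V)/(E[V])³ + E[|V − E[V]|³]/a⁴`. -/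
theorem stmt_9
    {Ω : Type*} [MeasurableSpace Ω] (μ : Measure Ω) [IsProbabilityMeasure μ]
    (V : Ω → ℝ) (a : ℝ) (ha : 0 < a)
    (hVa : ∀ᵐ ω ∂μ, a ≤ V ω)
    (hV : Integrable V μ) (hV2 : Integrable (fun ω => (V ω) ^ 2) μ)
    (hV3 : Integrable (fun ω => |V ω - ∫ ω', V ω' ∂μ| ^ 3) μ) :
    ∫ ω, 1 / V ω ∂μ
      ≤ 1 / (∫ ω, V ω ∂μ) + variance V μ / (∫ ω, V ω ∂μ) ^ 3
          + (∫ ω, |V ω - ∫ ω', V ω' ∂μ| ^ 3 ∂μ) / a ^ 4 := by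
  have hL2 : MemLp V 2 μ := (memLp_two_iff_integrable_sq hV.aestronglyMeasurable).2 hV2
  have hmean : a ≤ ∫ ω, V ω ∂μ := le_integral_of_ae_le hV hVa
  rw [← integral_taylor_two hL2, ← integral_div, ← integral_add (integrable_taylor_two hL2 _)
    (hV3.div_const _)]
  refine integral_mono_ae (integrable_one_div_of_ae_le ha hV.aemeasurable hVa)
    ((integrable_taylor_two hL2 _).add (hV3.div_const _)) ?_
  filter_upwards [hVa] with ω hω
  exact one_div_le_taylor_two_add_abs_pow_three ha hω hmean
end

section
/- Let B be a nonempty finite set, w : B → ℝ a probability mass function with w k > 0 for every k ∈ B, s : B → ℝ, a > 0, and for each m ≥ 1 let o_1, …, o_m be independent identically distributed B-valued random variables with P(o_j = k) = w k, and define V_m = a + (1/m) Σ_{j=1}^m exp(s(o_j))/w(o_j). Set μ = a + Σ_{k∈B} exp(s k) and c = Σ_{k∈B} exp(2·s k)/w k − (Σ_{k∈B} exp(s k))². Then there exists a function ε : ℕ → ℝ with ε(m) = o(1/m) as m → ∞ such that for every m ≥ 1, E[1/V_m] ≤ 1/μ + c/(m·μ³) + ε(m). -/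
/-!
Write `V_m = μ + S_m / m`, where `S_m` is the sum of the `m` i.i.d. centred bounded variables
`Y_j = exp (s (o_j)) / w (o_j) - ∑ k, exp (s k)`. The expansion of `1 / V` to fourth order at `μ`
has the exact remainder `(V - μ)⁴ / (μ⁴ V) ≤ (V - μ)⁴ / (μ⁴ a)`. Taking expectations, the linear
term vanishes, the quadratic one is `E[S_m²] / (m² μ³) = c / (m μ³)`, and with `cₖ = E[Y_jᵏ]`
the moments `E[S_m³] = m c₃` and `E[S_m⁴] = m c₄ + 3 m (m - 1) c₂²` make the remaining terms
`O(1 / m²)`.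
-/

open MeasureTheory ProbabilityTheory Filter Asymptotics

theorem one_div_le_taylor_four {a μ₀ v : ℝ} (ha : 0 < a) (hav : a ≤ v) (hμ₀ : μ₀ ≠ 0) :
    1 / v ≤ 1 / μ₀ - (v - μ₀) / μ₀ ^ 2 + (v - μ₀) ^ 2 / μ₀ ^ 3 - (v - μ₀) ^ 3 / μ₀ ^ 4
      + (v - μ₀) ^ 4 / (μ₀ ^ 4 * a) := by
  have hv : 0 < v := ha.trans_le hav
  have hexpand : 1 / v = 1 / μ₀ - (v - μ₀) / μ₀ ^ 2 + (v - μ₀) ^ 2 / μ₀ ^ 3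
      - (v - μ₀) ^ 3 / μ₀ ^ 4 + (v - μ₀) ^ 4 / (μ₀ ^ 4 * v) := by
    field_simp
    ring
  rw [hexpand]
  gcongr

theorem sum_mul_div_sub_sum_eq_zero {B : Type*} [Fintype B] {w : B → ℝ} (hw : ∀ k, w k ≠ 0)
    (hw₁ : ∑ k, w k = 1) (f : B → ℝ) : ∑ k, w k * (f k / w k - ∑ i, f i) = 0 := by
  simp only [mul_sub, mul_div_cancel₀ _ (hw _), Finset.sum_sub_distrib, ← Finset.sum_mul, hw₁,
    one_mul, sub_self]

theorem sum_mul_div_sub_sum_sq {B : Type*} [Fintype B] {w : B → ℝ} (hw : ∀ k, w k ≠ 0)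
    (hw₁ : ∑ k, w k = 1) (f : B → ℝ) :
    ∑ k, w k * (f k / w k - ∑ i, f i) ^ 2 = ∑ k, f k ^ 2 / w k - (∑ k, f k) ^ 2 := by
  have hterm : ∀ k, w k * (f k / w k - ∑ i, f i) ^ 2
      = f k ^ 2 / w k - 2 * (∑ i, f i) * f k + (∑ i, f i) ^ 2 * w k := fun k => by
    field_simp [hw k]
    ring
  simp only [hterm, Finset.sum_add_distrib, Finset.sum_sub_distrib, ← Finset.mul_sum, hw₁]
  ring

theorem add_one_div_mul_sum_range_eq (a T : ℝ) (x : ℕ → ℝ) {m : ℕ} (hm : m ≠ 0) :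
    a + 1 / (m : ℝ) * ∑ j ∈ Finset.range m, x j
      = a + T + (∑ j ∈ Finset.range m, (x j - T)) / m := by
  rw [Finset.sum_sub_distrib, Finset.sum_const, Finset.card_range, nsmul_eq_mul]
  field_simp
  ring

theorem isLittleO_const_div_sq_one_div (D : ℝ) :
    (fun m : ℕ => D / (m : ℝ) ^ 2) =o[atTop] fun m => 1 / (m : ℝ) := by
  have h := ((isBigO_refl (fun m : ℕ => 1 / (m : ℝ)) atTop).mul_isLittleO
    ((isLittleO_one_iff ℝ).2 tendsto_one_div_atTop_nhds_zero_nat)).const_mul_left D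
  simpa [div_eq_mul_inv, sq] using h

section

variable {Ω : Type*} [MeasurableSpace Ω] {μ : Measure Ω}

theorem integral_comp_eq_sum_s11 {B : Type*} [Fintype B] [MeasurableSpace B]
    [MeasurableSingletonClass B] [IsFiniteMeasure μ] {X : Ω → B} (hX : Measurable X) {w : B → ℝ}
    (hw : ∀ k, 0 ≤ w k) (hlaw : ∀ k, μ {ω | X ω = k} = ENNReal.ofReal (w k)) (φ : B → ℝ) :
    ∫ ω, φ (X ω) ∂μ = ∑ k, w k * φ k := by
  rw [← integral_map hX.aemeasurable (measurable_of_finite φ).aestronglyMeasurable,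
    integral_fintype .of_finite]
  refine Finset.sum_congr rfl fun k _ => ?_
  rw [measureReal_def, Measure.map_apply hX (measurableSet_singleton k)]
  simp only [Set.preimage, Set.mem_singleton_iff, hlaw k, ENNReal.toReal_ofReal (hw k), smul_eq_mul]

theorem integrable_pow_of_abs_le [IsFiniteMeasure μ] {X : Ω → ℝ} (hX : Measurable X) {K : ℝ}
    (hK : ∀ ω, |X ω| ≤ K) (k : ℕ) : Integrable (fun ω => X ω ^ k) μ :=
  .of_bound (hX.pow_const k).aestronglyMeasurable (K ^ k) <| ae_of_all _ fun ω => by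
    simpa only [Real.norm_eq_abs, abs_pow] using pow_le_pow_left₀ (abs_nonneg _) (hK ω) k

namespace ProbabilityTheory

theorem IndepFun.integral_add_pow {X Y : Ω → ℝ} (hXY : IndepFun X Y μ)
    (hX : ∀ k : ℕ, Integrable (fun ω => X ω ^ k) μ) (hY : ∀ k : ℕ, Integrable (fun ω => Y ω ^ k) μ)
    (n : ℕ) :
    ∫ ω, (X ω + Y ω) ^ n ∂μ =
      ∑ k ∈ Finset.range (n + 1), (∫ ω, X ω ^ k ∂μ) * (∫ ω, Y ω ^ (n - k) ∂μ) * n.choose k := by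
  have hpow : ∀ k l : ℕ, IndepFun (fun ω => X ω ^ k) (fun ω => Y ω ^ l) μ :=
    fun k l => hXY.comp (measurable_id.pow_const k) (measurable_id.pow_const l)
  simp_rw [add_pow]
  rw [integral_finsetSum]
  · refine Finset.sum_congr rfl fun k _ => ?_
    rw [integral_mul_const, (hpow k (n - k)).integral_fun_mul_eq_mul_integral (hX k).1 (hY _).1]
  · exact fun k _ => ((hpow k (n - k)).integrable_mul (hX k) (hY _)).mul_const _

theorem integral_one_div_add_le [IsProbabilityMeasure μ] {U : Ω → ℝ} (hU : Measurable U)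
    (hpow : ∀ k : ℕ, Integrable (fun ω => U ω ^ k) μ) {a μ₀ : ℝ} (ha : 0 < a)
    (haU : ∀ ω, a ≤ μ₀ + U ω) (hμ₀ : μ₀ ≠ 0) :
    ∫ ω, 1 / (μ₀ + U ω) ∂μ ≤ 1 / μ₀ - (∫ ω, U ω ∂μ) / μ₀ ^ 2 + (∫ ω, U ω ^ 2 ∂μ) / μ₀ ^ 3
      - (∫ ω, U ω ^ 3 ∂μ) / μ₀ ^ 4 + (∫ ω, U ω ^ 4 ∂μ) / (μ₀ ^ 4 * a) := by
  have hU1 : Integrable U μ := by simpa using hpow 1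
  have hinv : Integrable (fun ω => 1 / (μ₀ + U ω)) μ := by
    have hmeas : Measurable fun ω => 1 / (μ₀ + U ω) := by fun_prop
    refine .of_bound hmeas.aestronglyMeasurable (1 / a) (ae_of_all _ fun ω => ?_)
    have hpos : 0 < μ₀ + U ω := ha.trans_le (haU ω)
    rw [Real.norm_eq_abs, abs_of_pos (one_div_pos.2 hpos)]
    exact one_div_le_one_div_of_le ha (haU ω)
  have h₁ := (integrable_const (1 / μ₀)).sub (hU1.div_const (μ₀ ^ 2))
  have h₂ := h₁.add ((hpow 2).div_const (μ₀ ^ 3))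
  have h₃ := h₂.sub ((hpow 3).div_const (μ₀ ^ 4))
  have h₄ := h₃.add ((hpow 4).div_const (μ₀ ^ 4 * a))
  refine (integral_mono hinv h₄ fun ω => by
    simpa using one_div_le_taylor_four ha (haU ω) hμ₀).trans_eq ?_
  rw [integral_add' h₃ ((hpow 4).div_const _), integral_sub' h₂ ((hpow 3).div_const _),
    integral_add' h₁ ((hpow 2).div_const _), integral_sub' (integrable_const _) (hU1.div_const _)]
  simp [integral_div]

section SumRange

variable [IsProbabilityMeasure μ] {Y : ℕ → Ω → ℝ} {K : ℝ}

theorem integrable_sum_range_pow (hY : ∀ j, Measurable (Y j)) (hK : ∀ j ω, |Y j ω| ≤ K)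
    (m k : ℕ) : Integrable (fun ω => (∑ j ∈ Finset.range m, Y j ω) ^ k) μ :=
  integrable_pow_of_abs_le (Finset.measurable_sum _ fun j _ => hY j) (K := m * K) (fun ω => by
    simpa using (Finset.abs_sum_le_sum_abs _ (Finset.range m)).trans
      (Finset.sum_le_sum fun j _ => hK j ω)) k

theorem integral_sum_range_succ_pow (hY : ∀ j, Measurable (Y j)) (hind : iIndepFun Y μ)
    (hK : ∀ j ω, |Y j ω| ≤ K) (m n : ℕ) :
    ∫ ω, (∑ j ∈ Finset.range (m + 1), Y j ω) ^ n ∂μ =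
      ∑ k ∈ Finset.range (n + 1),
        (∫ ω, (∑ j ∈ Finset.range m, Y j ω) ^ k ∂μ) * (∫ ω, Y m ω ^ (n - k) ∂μ) * n.choose k := by
  have hSY : IndepFun (fun ω => ∑ j ∈ Finset.range m, Y j ω) (Y m) μ := by
    simpa only [Finset.sum_fn] using hind.indepFun_sum_range_succ hY m
  simp_rw [Finset.sum_range_succ _ m]
  exact hSY.integral_add_pow (integrable_sum_range_pow hY hK m)
    (integrable_pow_of_abs_le (hY m) (hK m)) n

theorem integral_sum_range_eq_zero (hY : ∀ j, Measurable (Y j)) (hK : ∀ j ω, |Y j ω| ≤ K)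
    (h₁ : ∀ j, ∫ ω, Y j ω ∂μ = 0) (m : ℕ) : ∫ ω, ∑ j ∈ Finset.range m, Y j ω ∂μ = 0 := by
  rw [integral_finsetSum _ fun j _ => by simpa using integrable_pow_of_abs_le (hY j) (hK j) 1]
  simp [h₁]

theorem integral_sum_range_sq (hY : ∀ j, Measurable (Y j)) (hind : iIndepFun Y μ)
    (hK : ∀ j ω, |Y j ω| ≤ K) (h₁ : ∀ j, ∫ ω, Y j ω ∂μ = 0) {c₂ : ℝ}
    (h₂ : ∀ j, ∫ ω, Y j ω ^ 2 ∂μ = c₂) (m : ℕ) :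
    ∫ ω, (∑ j ∈ Finset.range m, Y j ω) ^ 2 ∂μ = m * c₂ := by
  induction m with
  | zero => simp
  | succ m ih =>
    rw [integral_sum_range_succ_pow hY hind hK]
    simp [Finset.sum_range_succ, ih, h₁, h₂, integral_sum_range_eq_zero hY hK h₁]
    ring

theorem integral_sum_range_cube (hY : ∀ j, Measurable (Y j)) (hind : iIndepFun Y μ)
    (hK : ∀ j ω, |Y j ω| ≤ K) (h₁ : ∀ j, ∫ ω, Y j ω ∂μ = 0) {c₃ : ℝ}
    (h₃ : ∀ j, ∫ ω, Y j ω ^ 3 ∂μ = c₃) (m : ℕ) :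
    ∫ ω, (∑ j ∈ Finset.range m, Y j ω) ^ 3 ∂μ = m * c₃ := by
  induction m with
  | zero => simp
  | succ m ih =>
    rw [integral_sum_range_succ_pow hY hind hK]
    simp [Finset.sum_range_succ, ih, h₁, h₃, integral_sum_range_eq_zero hY hK h₁]
    ring

theorem integral_sum_range_pow_four (hY : ∀ j, Measurable (Y j)) (hind : iIndepFun Y μ)
    (hK : ∀ j ω, |Y j ω| ≤ K) (h₁ : ∀ j, ∫ ω, Y j ω ∂μ = 0) {c₂ c₄ : ℝ}
    (h₂ : ∀ j, ∫ ω, Y j ω ^ 2 ∂μ = c₂) (h₄ : ∀ j, ∫ ω, Y j ω ^ 4 ∂μ = c₄) (m : ℕ) :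
    ∫ ω, (∑ j ∈ Finset.range m, Y j ω) ^ 4 ∂μ = m * c₄ + 3 * m * (m - 1) * c₂ ^ 2 := by
  induction m with
  | zero => simp
  | succ m ih =>
    rw [integral_sum_range_succ_pow hY hind hK]
    simp [Finset.sum_range_succ, ih, h₁, h₂, h₄, integral_sum_range_eq_zero hY hK h₁,
      integral_sum_range_sq hY hind hK h₁ h₂, Nat.choose_two_right]
    ring

theorem integral_one_div_add_mean_le (hY : ∀ j, Measurable (Y j)) (hind : iIndepFun Y μ)
    (hK : ∀ j ω, |Y j ω| ≤ K) (h₁ : ∀ j, ∫ ω, Y j ω ∂μ = 0) {c₂ c₃ c₄ : ℝ}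
    (h₂ : ∀ j, ∫ ω, Y j ω ^ 2 ∂μ = c₂) (h₃ : ∀ j, ∫ ω, Y j ω ^ 3 ∂μ = c₃)
    (h₄ : ∀ j, ∫ ω, Y j ω ^ 4 ∂μ = c₄) {a μ₀ : ℝ} (ha : 0 < a) (hμ₀ : μ₀ ≠ 0) {m : ℕ}
    (hm : 1 ≤ m) (haY : ∀ ω, a ≤ μ₀ + (∑ j ∈ Finset.range m, Y j ω) / m) :
    ∫ ω, 1 / (μ₀ + (∑ j ∈ Finset.range m, Y j ω) / m) ∂μ
      ≤ 1 / μ₀ + c₂ / (m * μ₀ ^ 3)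
        + (|c₃| / μ₀ ^ 4 + (c₄ + 3 * c₂ ^ 2) / (μ₀ ^ 4 * a)) / m ^ 2 := by
  have hmeas : Measurable fun ω => (∑ j ∈ Finset.range m, Y j ω) / m := by fun_prop
  have hpow : ∀ k : ℕ, Integrable (fun ω => ((∑ j ∈ Finset.range m, Y j ω) / m) ^ k) μ :=
    fun k => by simpa only [div_pow] using (integrable_sum_range_pow hY hK m k).div_const _
  refine (integral_one_div_add_le hmeas hpow ha haY hμ₀).trans ?_
  simp only [div_pow, integral_div, integral_sum_range_eq_zero hY hK h₁,
    integral_sum_range_sq hY hind hK h₁ h₂, integral_sum_range_cube hY hind hK h₁ h₃,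
    integral_sum_range_pow_four hY hind hK h₁ h₂ h₄]
  have hm' : (1 : ℝ) ≤ m := by exact_mod_cast hm
  have hc₄ : 0 ≤ c₄ := h₄ 0 ▸ integral_nonneg fun ω => by positivity
  have hsecond : m * c₂ / m ^ 2 / μ₀ ^ 3 = c₂ / (m * μ₀ ^ 3) := by
    field_simp
  have hthird : -(m * c₃ / m ^ 3 / μ₀ ^ 4) ≤ |c₃| / μ₀ ^ 4 / m ^ 2 := calc
    _ = -c₃ / μ₀ ^ 4 / m ^ 2 := by field_simp
    _ ≤ |c₃| / μ₀ ^ 4 / m ^ 2 := by gcongr; exact neg_le_abs c₃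
  have hfourth : (m * c₄ + 3 * m * (m - 1) * c₂ ^ 2) / m ^ 4 / (μ₀ ^ 4 * a)
      ≤ (c₄ + 3 * c₂ ^ 2) / (μ₀ ^ 4 * a) / m ^ 2 := calc
    _ ≤ m ^ 2 * (c₄ + 3 * c₂ ^ 2) / m ^ 4 / (μ₀ ^ 4 * a) := by
      gcongr
      nlinarith [mul_nonneg (mul_nonneg (Nat.cast_nonneg m) (sub_nonneg.2 hm')) hc₄,
        mul_nonneg (Nat.cast_nonneg (α := ℝ) m) (sq_nonneg c₂)]
    _ = _ := by field_simp
  rw [zero_div, zero_div, sub_zero, hsecond, add_div (|c₃| / μ₀ ^ 4)]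
  linarith

end SumRange

end ProbabilityTheory

end

theorem stmt_11_general
    {B : Type*} [Fintype B] [MeasurableSpace B] [MeasurableSingletonClass B]
    (w : B → ℝ) (hw_pos : ∀ k, 0 < w k) (hw_sum : ∑ k, w k = 1)
    (s : B → ℝ) (a : ℝ) (ha : 0 < a)
    {Ω : Type*} [MeasurableSpace Ω] (μ : Measure Ω) [IsProbabilityMeasure μ]
    (o : ℕ → Ω → B) (hmeas : ∀ j, Measurable (o j))
    (hindep : iIndepFun o μ)
    (hdist : ∀ j k, μ {ω | o j ω = k} = ENNReal.ofReal (w k)) :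
    ∃ ε : ℕ → ℝ,
      (ε =o[atTop] fun m : ℕ => 1 / (m : ℝ)) ∧
      ∀ m : ℕ, 1 ≤ m →
        ∫ ω, 1 / (a + (1 / (m : ℝ)) *
              ∑ j ∈ Finset.range m, Real.exp (s (o j ω)) / w (o j ω)) ∂μ
          ≤ 1 / (a + ∑ k, Real.exp (s k))
            + ((∑ k, Real.exp (2 * s k) / w k) - (∑ k, Real.exp (s k)) ^ 2) /
                ((m : ℝ) * (a + ∑ k, Real.exp (s k)) ^ 3)
            + ε m := by
  set T := ∑ k, Real.exp (s k)
  set c := ∑ k, Real.exp (2 * s k) / w k - T ^ 2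
  set g : B → ℝ := fun k => Real.exp (s k) / w k - T
  set Y : ℕ → Ω → ℝ := fun j ω => g (o j ω)
  have hlaw : ∀ j (φ : B → ℝ), ∫ ω, φ (o j ω) ∂μ = ∑ k, w k * φ k :=
    fun j => integral_comp_eq_sum_s11 (hmeas j) (fun k => (hw_pos k).le) (hdist j)
  have hY : ∀ j, Measurable (Y j) := fun j => (measurable_of_finite g).comp (hmeas j)
  have hind : iIndepFun Y μ := hindep.comp _ fun _ => measurable_of_finite g
  have hK : ∀ j ω, |Y j ω| ≤ ∑ k, |g k| := fun j ω =>
    Finset.single_le_sum (f := fun k => |g k|) (fun k _ => abs_nonneg _) (Finset.mem_univ _)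
  have h₁ : ∀ j, ∫ ω, Y j ω ∂μ = 0 := fun j =>
    (hlaw j g).trans (sum_mul_div_sub_sum_eq_zero (fun k => (hw_pos k).ne') hw_sum _)
  have h₂ : ∀ j, ∫ ω, Y j ω ^ 2 ∂μ = c := fun j => by
    rw [hlaw j (g · ^ 2), sum_mul_div_sub_sum_sq (fun k => (hw_pos k).ne') hw_sum]
    simp only [c, ← Real.exp_nat_mul, Nat.cast_ofNat]
    rfl
  have hμ₀ : 0 < a + T :=
    add_pos_of_pos_of_nonneg ha (Finset.sum_nonneg fun k _ => (Real.exp_pos _).le)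
  refine ⟨fun m => (|∑ k, w k * g k ^ 3| / (a + T) ^ 4
    + (∑ k, w k * g k ^ 4 + 3 * c ^ 2) / ((a + T) ^ 4 * a)) / m ^ 2,
    isLittleO_const_div_sq_one_div _, fun m hm => ?_⟩
  have haV : ∀ ω, a ≤ a + 1 / (m : ℝ) * ∑ j ∈ Finset.range m, Real.exp (s (o j ω)) / w (o j ω) :=
    fun ω => le_add_of_nonneg_right (mul_nonneg (by positivity)
      (Finset.sum_nonneg fun j _ => div_nonneg (Real.exp_pos _).le (hw_pos _).le))
  simp_rw [add_one_div_mul_sum_range_eq a T _ (Nat.one_le_iff_ne_zero.1 hm)] at haV ⊢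
  exact integral_one_div_add_mean_le hY hind hK h₁ h₂ (fun j => hlaw j (g · ^ 3))
    (fun j => hlaw j (g · ^ 4)) ha hμ₀.ne' hm haV

/-- Lemma A.3 made precise: the expected reciprocal of the importance-weighted
partition-function estimator `V_m` is bounded by `1/μ + c/(m·μ³)` up to a term that is
`o(1/m)`, where `μ = E[V_m]` and `Var(V_m) = c/m`. -/
theorem stmt_11
    {B : Type*} [Fintype B] [Nonempty B] [MeasurableSpace B] [MeasurableSingletonClass B]
    (w : B → ℝ) (hw_pos : ∀ k, 0 < w k) (hw_sum : ∑ k, w k = 1)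
    (s : B → ℝ) (a : ℝ) (ha : 0 < a)
    {Ω : Type*} [MeasurableSpace Ω] (μ : Measure Ω) [IsProbabilityMeasure μ]
    (o : ℕ → Ω → B) (hmeas : ∀ j, Measurable (o j))
    (hindep : iIndepFun o μ)
    (hdist : ∀ j k, μ {ω | o j ω = k} = ENNReal.ofReal (w k)) :
    ∃ ε : ℕ → ℝ,
      (ε =o[atTop] fun m : ℕ => 1 / (m : ℝ)) ∧
      ∀ m : ℕ, 1 ≤ m →
        ∫ ω, 1 / (a + (1 / (m : ℝ)) *
              ∑ j ∈ Finset.range m, Real.exp (s (o j ω)) / w (o j ω)) ∂μ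
          ≤ 1 / (a + ∑ k, Real.exp (s k))
            + ((∑ k, Real.exp (2 * s k) / w k) - (∑ k, Real.exp (s k)) ^ 2) /
                ((m : ℝ) * (a + ∑ k, Real.exp (s k)) ^ 3)
            + ε m :=
  stmt_11_general w hw_pos hw_sum s a ha μ o hmeas hindep hdist
end

section
/- Let B be a nonempty finite set, w : B → ℝ a probability mass function with w k > 0 for every k ∈ B, s : B → ℝ, g : B → ℝ, a > 0, and let o_1, …, o_m (m ≥ 1) be independent identically distributed B-valued random variables with P(o_j = k) = w k for every k ∈ B. Then E[ (exp(s(o_m))/(m·w(o_m))) · g(o_m) / (a + (1/m) Σ_{j=1}^m exp(s(o_j))/w(o_j)) ] = (1/m) Σ_{k∈B} exp(s k) · g k · E[ 1 / (a + (1/m) Σ_{j=1}^{m−1} exp(s(o_j))/w(o_j) + exp(s k)/(m·w k)) ]. -/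
/-!
Split the integrand according to the value `k` of the last sample `o_m`. Since `o_m` is
independent of `(o_1, …, o_{m-1})`, the term on `{o_m = k}` integrates to
`P(o_m = k) = w k` times an expectation over the first `m - 1` samples, and `w k` cancels the
importance weight `exp (s k) / w k`. Every integrand is a function of finitely many `B`-valued
random variables, hence takes finitely many values and is integrable.
-/

open MeasureTheory ProbabilityTheory

namespace ProbabilityTheory

variable {Ω B E : Type*} [MeasurableSpace Ω] [MeasurableSpace B] [MeasurableSpace E]
  {μ : Measure Ω}

theorem IndepFun.integral_comp_eq_sum_mul_integral [Fintype B] [MeasurableSingletonClass B]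
    {X : Ω → E} {Y : Ω → B} (hXY : IndepFun X Y μ) (hX : Measurable X) (hY : Measurable Y)
    (f : B → E → ℝ) (hf_meas : ∀ k, Measurable (f k))
    (hf_int : ∀ k, Integrable (fun ω => f k (X ω)) μ) :
    ∫ ω, f (Y ω) (X ω) ∂μ = ∑ k, μ.real {ω | Y ω = k} * ∫ ω, f k (X ω) ∂μ := by
  classical
  set δ : B → B → ℝ := fun k => ({k} : Set B).indicator 1
  have hδ_meas (k : B) : Measurable (δ k) := measurable_one.indicator (measurableSet_singleton k)
  have hsplit (ω : Ω) : f (Y ω) (X ω) = ∑ k, δ k (Y ω) * f k (X ω) := by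
    simp [δ, Pi.single_apply]
  have hterm_int (k : B) : Integrable (fun ω => δ k (Y ω) * f k (X ω)) μ :=
    (hf_int k).bdd_mul ((hδ_meas k).comp hY).aestronglyMeasurable (c := 1)
      (ae_of_all _ fun ω => by by_cases h : Y ω = k <;> simp [δ, h])
  have hδ_integral (k : B) : ∫ ω, δ k (Y ω) ∂μ = μ.real {ω | Y ω = k} := by
    simp_rw [δ, ← Set.indicator_comp_right]
    exact integral_indicator_one (hY (measurableSet_singleton k))
  simp_rw [hsplit]
  rw [integral_finsetSum _ fun k _ => hterm_int k]
  refine Finset.sum_congr rfl fun k _ => ?_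
  rw [← hδ_integral]
  exact (hXY.symm.comp (hδ_meas k) (hf_meas k)).integral_fun_mul_eq_mul_integral
    ((hδ_meas k).comp hY).aestronglyMeasurable ((hf_meas k).comp hX).aestronglyMeasurable

theorem iIndepFun.indepFun_init_last {n : ℕ} {o : Fin (n + 1) → Ω → B} (h : iIndepFun o μ)
    (hmeas : ∀ j, Measurable (o j)) :
    IndepFun (fun ω (j : Fin n) => o j.castSucc ω) (o (Fin.last n)) μ := by
  have hmem (j : Fin n) : j.castSucc ∈ ({Fin.last n}ᶜ : Finset (Fin (n + 1))) := by
    simp [(Fin.castSucc_lt_last j).ne]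
  have hinit : Measurable fun (v : ({Fin.last n}ᶜ : Finset (Fin (n + 1))) → B) (j : Fin n) =>
      v ⟨j.castSucc, hmem j⟩ := by fun_prop
  have hlast : Measurable fun (v : ({Fin.last n} : Finset (Fin (n + 1))) → B) =>
      v ⟨Fin.last n, Finset.mem_singleton_self _⟩ := measurable_pi_apply _
  exact (h.indepFun_finset _ _ disjoint_compl_left hmeas).comp hinit hlast

end ProbabilityTheory

theorem stmt_14_general
    {B : Type*} [Fintype B] [MeasurableSpace B] [MeasurableSingletonClass B]
    (w : B → ℝ) (hw_pos : ∀ k, 0 < w k)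
    (s g : B → ℝ) (a : ℝ)
    {Ω : Type*} [MeasurableSpace Ω] (μ : Measure Ω) [IsProbabilityMeasure μ]
    (n : ℕ)
    (o : Fin (n + 1) → Ω → B) (hmeas : ∀ j, Measurable (o j))
    (hindep : iIndepFun o μ)
    (hdist : ∀ j k, μ {ω | o j ω = k} = ENNReal.ofReal (w k)) :
    ∫ ω,
        (Real.exp (s (o (Fin.last n) ω)) / (((n : ℝ) + 1) * w (o (Fin.last n) ω)))
            * g (o (Fin.last n) ω) /
          (a + (1 / ((n : ℝ) + 1)) *
            ∑ j : Fin (n + 1), Real.exp (s (o j ω)) / w (o j ω)) ∂μ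
      = (1 / ((n : ℝ) + 1)) * ∑ k, Real.exp (s k) * g k *
          ∫ ω, 1 /
            (a + (1 / ((n : ℝ) + 1)) *
                (∑ j : Fin n, Real.exp (s (o j.castSucc ω)) / w (o j.castSucc ω))
              + Real.exp (s k) / (((n : ℝ) + 1) * w k)) ∂μ := by
  let f : B → (Fin n → B) → ℝ := fun k v =>
    Real.exp (s k) / (((n : ℝ) + 1) * w k) * g k *
      (1 / (a + (1 / ((n : ℝ) + 1)) * (∑ j, Real.exp (s (v j)) / w (v j))
        + Real.exp (s k) / (((n : ℝ) + 1) * w k)))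
  have hinit : Measurable fun ω (j : Fin n) => o j.castSucc ω := by fun_prop
  have hlaw (k : B) : μ.real {ω | o (Fin.last n) ω = k} = w k := by
    rw [measureReal_def, hdist, ENNReal.toReal_ofReal (hw_pos k).le]
  calc _ = ∫ ω, f (o (Fin.last n) ω) (fun j => o j.castSucc ω) ∂μ := by
        congr 1 with ω
        simp only [f, Fin.sum_univ_castSucc, mul_comm ((n : ℝ) + 1), ← div_div]
        ring
    _ = ∑ k, w k * ∫ ω, f k (fun j => o j.castSucc ω) ∂μ := by
        rw [(hindep.indepFun_init_last hmeas).integral_comp_eq_sum_mul_integral hinit (hmeas _) f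
          (fun k => measurable_of_finite _)
          fun k => (Integrable.of_finite (f := f k)).comp_measurable hinit]
        simp_rw [hlaw]
    _ = _ := by
        rw [Finset.mul_sum]
        refine Finset.sum_congr rfl fun k _ => ?_
        rw [integral_const_mul]
        field_simp [(hw_pos k).ne']

/-- The conditioning identity at the core of Lemma A.2: conditioning on the first `m−1`
samples and summing over the values of the independent last sample `o_m` (here `m = n+1`
and `o_m = o (Fin.last n)`) converts the expectation of one term of the self-normalized
importance-sampling ratio into an average over the batch of expectations of reciprocals. -/
theorem stmt_14
    {B : Type*} [Fintype B] [Nonempty B] [MeasurableSpace B] [MeasurableSingletonClass B]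
    (w : B → ℝ) (hw_pos : ∀ k, 0 < w k) (hw_sum : ∑ k, w k = 1)
    (s g : B → ℝ) (a : ℝ) (ha : 0 < a)
    {Ω : Type*} [MeasurableSpace Ω] (μ : Measure Ω) [IsProbabilityMeasure μ]
    (n : ℕ)
    (o : Fin (n + 1) → Ω → B) (hmeas : ∀ j, Measurable (o j))
    (hindep : iIndepFun o μ)
    (hdist : ∀ j k, μ {ω | o j ω = k} = ENNReal.ofReal (w k)) :
    ∫ ω,
        (Real.exp (s (o (Fin.last n) ω)) / (((n : ℝ) + 1) * w (o (Fin.last n) ω)))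
            * g (o (Fin.last n) ω) /
          (a + (1 / ((n : ℝ) + 1)) *
            ∑ j : Fin (n + 1), Real.exp (s (o j ω)) / w (o j ω)) ∂μ
      = (1 / ((n : ℝ) + 1)) * ∑ k, Real.exp (s k) * g k *
          ∫ ω, 1 /
            (a + (1 / ((n : ℝ) + 1)) *
                (∑ j : Fin n, Real.exp (s (o j.castSucc ω)) / w (o j.castSucc ω))
              + Real.exp (s k) / (((n : ℝ) + 1) * w k)) ∂μ :=
  stmt_14_general w hw_pos s g a μ n o hmeas hindep hdist
end
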